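/- Let α ∈ (0,1) and let k ≥ 2 be an integer. For every θ ∈ ((1−α)kπ/(k−α), π), one has λ_k(θ) := (2k)^α · sin(θ/(2k))^α · sin(θ/2 + α(π/2 − θ/(2k))) / sin(θ/2) < (2k)^α. Geometrically, the straight line a − b = (2k)^α lies strictly below the curve Γ_0. -/

import Mathlib

open Real

/-- Along the curve `Γ_0`, the quantity
`λ_k(θ) = (2k)^α sin(θ/(2k))^α sin(θ/2 + α(π/2 − θ/(2k))) / sin(θ/2)`. -/
noncomputable def lamk (α : ℝ) (k : ℕ) (θ : ℝ) : ℝ :=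
  (2 * (k:ℝ)) ^ α * Real.sin (θ / (2 * (k:ℝ))) ^ α *
    Real.sin (θ / 2 + α * (Real.pi / 2 - θ / (2 * (k:ℝ)))) / Real.sin (θ / 2)

/-! With `x = θ/(2k)` and `v = θ/2`, the lower bound on `θ` says `π/2 − v < α (π/2 − x)`, i.e.
`v = t x + (1 − t) π/2` with `t < α`. Weighted AM–GM and concavity of `sin` give
`sin x ^ t ≤ t sin x + (1 − t) ≤ sin v`; since `sin x < 1`, `sin x ^ α < sin x ^ t`, and the
remaining factor `sin (v + α (π/2 − x))` is at most `1`. -/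

namespace Real

theorem sin_rpow_le_sin_lineMap {x t : ℝ} (hx : x ∈ Set.Icc 0 π) (ht : t ∈ Set.Icc (0:ℝ) 1) :
    sin x ^ t ≤ sin (t * x + (1 - t) * (π / 2)) := by
  obtain ⟨ht0, ht1⟩ := ht
  have hsin : 0 ≤ sin x := sin_nonneg_of_nonneg_of_le_pi hx.1 hx.2
  have hπ2 : π / 2 ∈ Set.Icc 0 π := ⟨by linarith [pi_pos], by linarith [pi_pos]⟩
  calc sin x ^ t = sin x ^ t * 1 ^ (1 - t) := by rw [one_rpow, mul_one]
    _ ≤ t * sin x + (1 - t) * 1 :=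
      geom_mean_le_arith_mean2_weighted ht0 (by linarith) hsin zero_le_one (by ring)
    _ = t * sin x + (1 - t) * sin (π / 2) := by rw [sin_pi_div_two]
    _ ≤ sin (t * x + (1 - t) * (π / 2)) :=
      strictConcaveOn_sin_Icc.concaveOn.2 hx hπ2 ht0 (by linarith) (by ring)

theorem sin_rpow_lt_sin_of_pi_div_two_sub_lt {x v α : ℝ} (hx : 0 < x) (hxv : x ≤ v)
    (hv : v ≤ π / 2) (hgap : π / 2 - v < α * (π / 2 - x)) : sin x ^ α < sin v := by
  have hden : 0 < π / 2 - x := by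
    rcases (sub_nonneg.2 (hxv.trans hv)).lt_or_eq with h | h
    · exact h
    · rw [← h, mul_zero] at hgap; linarith
  set t := (π / 2 - v) / (π / 2 - x) with ht
  have htα : t < α := by rwa [ht, div_lt_iff₀ hden]
  have htv : t * x + (1 - t) * (π / 2) = v := by
    linear_combination -(div_mul_cancel₀ (π / 2 - v) hden.ne')
  have ht01 : t ∈ Set.Icc (0:ℝ) 1 :=
    ⟨div_nonneg (by linarith) hden.le, (div_le_one hden).2 (by linarith)⟩
  have hsin0 : 0 < sin x := sin_pos_of_pos_of_lt_pi hx (by linarith [pi_pos])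
  have hsin1 : sin x < 1 := by
    simpa using sin_lt_sin_of_lt_of_le_pi_div_two (by linarith [pi_pos]) le_rfl (by linarith)
  calc sin x ^ α < sin x ^ t := rpow_lt_rpow_of_exponent_gt hsin0 hsin1 htα
    _ ≤ sin v := htv ▸ sin_rpow_le_sin_lineMap ⟨hx.le, by linarith [pi_pos]⟩ ht01

end Real

theorem lamk_lt_line (α : ℝ) (hα : α ∈ Set.Ioo (0:ℝ) 1) (k : ℕ) (hk : 2 ≤ k)
    (θ : ℝ) (hθ : θ ∈ Set.Ioo ((1 - α) * (k:ℝ) * π / ((k:ℝ) - α)) π) :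
    lamk α k θ < (2 * (k:ℝ)) ^ α := by
  obtain ⟨hα0, hα1⟩ := hα
  obtain ⟨hθlo, hθπ⟩ := hθ
  have hk2 : (2:ℝ) ≤ k := by exact_mod_cast hk
  have hkα : 0 < (k:ℝ) - α := by linarith
  have hθlo' : (1 - α) * k * π < θ * (k - α) := (div_lt_iff₀ hkα).1 hθlo
  have hθ0 : 0 < θ :=
    pos_of_mul_pos_left (lt_trans (by have := sub_pos.2 hα1; positivity) hθlo') hkα.le
  have hx : 0 < θ / (2 * k) := by positivity
  have hxv : θ / (2 * k) ≤ θ / 2 := div_le_div_of_nonneg_left hθ0.le two_pos (by linarith)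
  have hgap : π / 2 - θ / 2 < α * (π / 2 - θ / (2 * k)) := by
    rw [← sub_pos]
    have : α * (π / 2 - θ / (2 * k)) - (π / 2 - θ / 2)
        = (θ * (k - α) - (1 - α) * k * π) / (2 * k) := by field_simp; ring
    rw [this]; exact div_pos (by linarith) (by positivity)
  have hsinv : 0 < sin (θ / 2) := sin_pos_of_pos_of_lt_pi (by positivity) (by linarith)
  have hpow : sin (θ / (2 * k)) ^ α < sin (θ / 2) :=
    sin_rpow_lt_sin_of_pi_div_two_sub_lt hx hxv (by linarith) hgap
  rw [lamk, div_lt_iff₀ hsinv, mul_assoc]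
  refine mul_lt_mul_of_pos_left ?_ (by positivity)
  calc sin (θ / (2 * k)) ^ α * sin (θ / 2 + α * (π / 2 - θ / (2 * k)))
      ≤ sin (θ / (2 * k)) ^ α :=
        mul_le_of_le_one_right (rpow_nonneg (sin_pos_of_pos_of_lt_pi hx (by linarith)).le _)
          (sin_le_one _)
    _ < sin (θ / 2) := hpow
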